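/- arXiv:1912.03729 — 4 statements merged into one kernel-verified Lean document; each statement's English description precedes it below -/
import Mathlib

section
/- Let k ≥ 1, let α be a finite type, and let f : α → α be a function such that the k-fold iterate f^[k] is the identity. If k does not divide the cardinality of α, then there exist x ∈ α and d ∈ ℕ with 0 < d, d < k, d ∣ k, and f^[d](x) = x. -/
/-!
If `f^[k] = id` with `k ≥ 1`, then `f` is a permutation, and if no point is fixed by `f^[d]` for a
proper divisor `d` of `k`, every point has minimal period exactly `k`. The orbits of the cyclic
group generated by `f` then partition the type into blocks of size `k`, so `k` divides its
cardinality.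
-/

open Function MulAction

theorem MulAction.dvd_card_of_forall_card_orbit_eq {G α : Type*} [Group G] [MulAction G α]
    [Fintype α] {n : ℕ} (h : ∀ x : α, Nat.card (orbit G x) = n) : n ∣ Fintype.card α := by
  classical
  rw [Fintype.card_congr (selfEquivSigmaOrbits G α), Fintype.card_sigma]
  exact Finset.dvd_sum fun ω _ => by rw [Fintype.card_eq_nat_card, h]

theorem Equiv.Perm.dvd_card_of_forall_minimalPeriod_eq {α : Type*} [Fintype α]
    (σ : Equiv.Perm α) {n : ℕ} (h : ∀ x, minimalPeriod σ x = n) : n ∣ Fintype.card α := by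
  classical
  refine dvd_card_of_forall_card_orbit_eq (G := Subgroup.zpowers σ) fun x => ?_
  rw [← h x, Nat.card_eq_fintype_card, ← minimalPeriod_eq_card]
  rfl

theorem Function.injective_of_iterate_eq_id {α : Type*} {f : α → α} {k : ℕ} (hk : k ≠ 0)
    (hf : f^[k] = id) : Injective f := by
  obtain ⟨n, rfl⟩ := Nat.exists_eq_succ_of_ne_zero hk
  rw [iterate_succ] at hf
  exact Injective.of_comp (f := f^[n]) (hf ▸ injective_id)

theorem Function.IsPeriodicPt.minimalPeriod_eq_of_forall_lt_dvd {α : Type*} {f : α → α}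
    {x : α} {k : ℕ} (hx : IsPeriodicPt f k x) (hk : 0 < k)
    (h : ∀ d, 0 < d → d < k → d ∣ k → f^[d] x ≠ x) : minimalPeriod f x = k := by
  by_contra hne
  exact h _ (hx.minimalPeriod_pos hk) ((Nat.le_of_dvd hk hx.minimalPeriod_dvd).lt_of_ne hne)
    hx.minimalPeriod_dvd (iterate_minimalPeriod (f := f))

theorem stmt_4 (k : ℕ) (hk : 1 ≤ k) (α : Type) [Fintype α] (f : α → α)
    (hf : f^[k] = id) (h : ¬ k ∣ Fintype.card α) :
    ∃ (x : α) (d : ℕ), 0 < d ∧ d < k ∧ d ∣ k ∧ f^[d] x = x := by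
  by_contra! hnone
  have hbij : Bijective f :=
    Finite.injective_iff_bijective.mp (injective_of_iterate_eq_id (by omega) hf)
  exact h <| Equiv.Perm.dvd_card_of_forall_minimalPeriod_eq (Equiv.ofBijective f hbij) fun x =>
    IsPeriodicPt.minimalPeriod_eq_of_forall_lt_dvd (congrFun hf x) hk (hnone x)
end

section
/- Let k ≥ 2, ℓ ≥ 1, and let N be a natural number with N ≡ ℓ (mod k·ℓ!). Then the binomial coefficient C(N, ℓ) satisfies C(N, ℓ) ≡ 1 (mod k). -/
theorem stmt_7 (k ℓ N : ℕ) (hk : 2 ≤ k) (hℓ : 1 ≤ ℓ)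
    (hN : N ≡ ℓ [MOD k * Nat.factorial ℓ]) :
    Nat.choose N ℓ ≡ 1 [MOD k] := by
  have hfac : 1 ≤ ℓ.factorial := ℓ.factorial_pos
  have hm : ℓ < k * ℓ.factorial :=
    calc ℓ < 2 * ℓ.factorial := by have := ℓ.self_le_factorial; omega
    _ ≤ k * ℓ.factorial := Nat.mul_le_mul_right _ hk
  have hNℓ : ℓ ≤ N := by
    have : N % (k * ℓ.factorial) = ℓ := by
      rw [hN, Nat.mod_eq_of_lt hm]
    calc ℓ = N % (k * ℓ.factorial) := this.symm
    _ ≤ N := Nat.mod_le _ _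
  -- descending factorials congruent
  have key : ∀ j, j ≤ ℓ →
      Nat.descFactorial N j ≡ Nat.descFactorial ℓ j [MOD k * ℓ.factorial] := by
    intro j hj
    induction j with
    | zero => rfl
    | succ i ih =>
      have hi : i ≤ ℓ := Nat.le_of_succ_le hj
      have hsub : N - i ≡ ℓ - i [MOD k * ℓ.factorial] := by
        apply Nat.ModEq.add_right_cancel' i
        rwa [Nat.sub_add_cancel (hi.trans hNℓ), Nat.sub_add_cancel hi]
      simpa [Nat.descFactorial_succ] using hsub.mul (ih hi)
  have h2 := key ℓ le_rfl
  rw [Nat.descFactorial_eq_factorial_mul_choose, Nat.descFactorial_self] at h2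
  have h3 : ℓ.factorial * N.choose ℓ ≡ ℓ.factorial * 1 [MOD k * ℓ.factorial] := by
    simpa using h2
  have h4 : ℓ.factorial * N.choose ℓ ≡ ℓ.factorial * 1 [MOD ℓ.factorial * k] := by
    rwa [Nat.mul_comm k ℓ.factorial] at h3
  exact Nat.ModEq.mul_left_cancel' ℓ.factorial_ne_zero h4
end

section
/- Let k ≥ 1, ℓ ≥ 1, s ≥ 1, and let α : Fin s → ℕ satisfy α(i) ≥ 1 for all i and ∑_{i} α(i) = ℓ. Then k divides the product ∏_{i} C(k·ℓ, α(i)) of binomial coefficients. -/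
lemma aux_fact_choose {n m p : ℕ} (hm : 1 ≤ m) (hmn : m ≤ n) :
    n.factorization p ≤ m.factorization p + (n.choose m).factorization p := by
  obtain ⟨n', rfl⟩ : ∃ n', n = n' + 1 := ⟨n - 1, by omega⟩
  obtain ⟨m', rfl⟩ : ∃ m', m = m' + 1 := ⟨m - 1, by omega⟩
  have hid : (n' + 1) * n'.choose m' = (n' + 1).choose (m' + 1) * (m' + 1) :=
    Nat.add_one_mul_choose_eq n' m'
  have hc : n'.choose m' ≠ 0 := (Nat.choose_pos (by omega)).ne'
  have hc2 : (n' + 1).choose (m' + 1) ≠ 0 := (Nat.choose_pos hmn).ne'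
  have h := congrArg Nat.factorization hid
  rw [Nat.factorization_mul (by omega) hc, Nat.factorization_mul hc2 (by omega)] at h
  have h2 := DFunLike.congr_fun h p
  simp only [Finsupp.add_apply] at h2
  omega

theorem stmt_8 (k ℓ s : ℕ) (hk : 1 ≤ k) (hℓ : 1 ≤ ℓ) (hs : 1 ≤ s)
    (α : Fin s → ℕ) (hα : ∀ i, 1 ≤ α i) (hsum : ∑ i, α i = ℓ) :
    k ∣ ∏ i, Nat.choose (k * ℓ) (α i) := by
  have hαℓ : ∀ i, α i ≤ ℓ := by
    intro i
    rw [← hsum]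
    exact Finset.single_le_sum (fun j _ => Nat.zero_le _) (Finset.mem_univ i)
  have hprod_ne : (∏ i, Nat.choose (k * ℓ) (α i)) ≠ 0 := by
    apply Finset.prod_ne_zero_iff.mpr
    intro i _
    exact (Nat.choose_pos ((hαℓ i).trans (Nat.le_mul_of_pos_left ℓ hk))).ne'
  rw [← Nat.factorization_le_iff_dvd (by omega) hprod_ne]
  intro p
  by_cases hp : p.Prime
  · -- pick i₀ minimizing (α i).factorization p
    obtain ⟨i₀, -, hmin⟩ := Finset.exists_min_image Finset.univ
      (fun i => (α i).factorization p) ⟨⟨0, hs⟩, Finset.mem_univ _⟩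
    set m := (α i₀).factorization p with hm
    have hmℓ : m ≤ ℓ.factorization p := by
      rw [← hp.pow_dvd_iff_le_factorization (by omega)]
      rw [← hsum]
      apply Finset.dvd_sum
      intro i _
      calc p ^ m ∣ p ^ ((α i).factorization p) :=
            pow_dvd_pow p (hmin i (Finset.mem_univ i))
        _ ∣ α i := Nat.ordProj_dvd _ _
    have h1 : (k * ℓ).factorization p ≤ m + ((k * ℓ).choose (α i₀)).factorization p :=
      aux_fact_choose (hα i₀) ((hαℓ i₀).trans (Nat.le_mul_of_pos_left ℓ hk))
    have h2 : (k * ℓ).factorization p = k.factorization p + ℓ.factorization p := by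
      rw [Nat.factorization_mul (by omega) (by omega)]; rfl
    have h3 : ((k * ℓ).choose (α i₀)).factorization p ≤
        (∏ i, Nat.choose (k * ℓ) (α i)).factorization p :=
      (Nat.factorization_le_iff_dvd (by
        exact (Nat.choose_pos ((hαℓ i₀).trans (Nat.le_mul_of_pos_left ℓ hk))).ne')
        hprod_ne).mpr (Finset.dvd_prod_of_mem _ (Finset.mem_univ i₀)) p
    omega
  · simp [Nat.factorization_eq_zero_of_not_prime _ hp]
end

section
/- For every k ≥ 2 there exists a decidable relation R : Fin (k+1) → Fin (k+1) → Prop (a bipartite graph with k+1 vertices on each side) such that: for every i ∈ Fin (k+1), the number of j with R i j equals 1 if i is the last element and k otherwise, and for every j ∈ Fin (k+1), the number of i with R i j equals 1 if j is the last element and k otherwise. -/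
theorem stmt_12 (k : ℕ) (hk : 2 ≤ k) :
    ∃ R : Fin (k + 1) → Fin (k + 1) → Bool,
      (∀ i : Fin (k + 1),
        (Finset.univ.filter (fun j => R i j)).card = if i = Fin.last k then 1 else k) ∧
      (∀ j : Fin (k + 1),
        (Finset.univ.filter (fun i => R i j)).card = if j = Fin.last k then 1 else k) := by
  classical
  have h0last : (0 : Fin (k+1)) ≠ Fin.last k := by
    simp [Fin.ext_iff, Fin.last]
    omega
  set R : Fin (k+1) → Fin (k+1) → Bool := fun i j =>
    if i = Fin.last k then decide (j = 0)
    else if j = Fin.last k then decide (i = 0)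
    else !(decide (i = 0) && decide (j = 0)) with hR
  have hsymm : ∀ i j, R i j = R j i := by
    intro i j
    by_cases hi : i = Fin.last k <;> by_cases hj : j = Fin.last k <;>
      simp [hR, hi, hj, h0last, Ne.symm h0last, Bool.and_comm, Bool.or_comm]
  have hk0 : k ≠ 0 := by omega
  have key : ∀ i : Fin (k+1),
      (Finset.univ.filter (fun j => R i j)).card = if i = Fin.last k then 1 else k := by
    intro i
    by_cases hi : i = Fin.last k
    · rw [if_pos hi]
      have : Finset.univ.filter (fun j => R i j) = {(0 : Fin (k+1))} := by
        ext j
        simp [hR, hi]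
      rw [this, Finset.card_singleton]
    · rw [if_neg hi]
      by_cases h0 : i = 0
      · have : Finset.univ.filter (fun j => R i j) = Finset.univ.erase (0 : Fin (k+1)) := by
          ext j
          by_cases hj : j = Fin.last k <;>
            simp [hR, hi, h0, hj, Ne.symm h0last, hk0]
        rw [this, Finset.card_erase_of_mem (Finset.mem_univ _), Finset.card_univ,
          Fintype.card_fin]
        omega
      · have : Finset.univ.filter (fun j => R i j) = Finset.univ.erase (Fin.last k) := by
          ext j
          by_cases hj : j = Fin.last k <;>
            simp [hR, hi, h0, hj, hk0]
        rw [this, Finset.card_erase_of_mem (Finset.mem_univ _), Finset.card_univ,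
          Fintype.card_fin]
        omega
  refine ⟨R, key, ?_⟩
  intro j
  have : (Finset.univ.filter (fun i => R i j)) = Finset.univ.filter (fun i => R j i) := by
    apply Finset.filter_congr
    intro i _
    rw [hsymm]
  rw [this, key]
end
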